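/- Let C be a triangulated category with a semi-orthogonal decomposition (C(0), C(-1)), i.e. C(0) and C(-1) are full triangulated subcategories with Hom(x, y) = 0 for all x ∈ C(0), y ∈ C(-1), and C is generated by C(0) and C(-1) under cones and shifts. Then for every object x of C there exists a distinguished triangle x₀ → x → x₁ → x₀[1] with x₀ ∈ C(0) and x₁ ∈ C(-1). -/

import Mathlib

open CategoryTheory CategoryTheory.Limits CategoryTheory.Pretriangulated

namespace CategoryTheory

/-- Ported from the older Mathlib: a predicate closed under isomorphisms. -/
class ClosedUnderIsomorphisms {C : Type*} [Category C] (P : C → Prop) : Prop where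
  of_iso {X Y : C} (_ : X ≅ Y) (_ : P X) : P Y

namespace Triangulated

/-- Ported from the older Mathlib: a triangulated subcategory. -/
structure Subcategory (C : Type*) [Category C] [HasZeroObject C] [HasShift C ℤ]
    [Preadditive C] [∀ n : ℤ, (shiftFunctor C n).Additive] [Pretriangulated C] where
  P : C → Prop
  zero' : ∃ (Z : C) (_ : IsZero Z), P Z
  shift (X : C) (n : ℤ) : P X → P (X⟦n⟧)
  ext₂' (T : Triangle C) (_ : T ∈ distTriang C) : P T.obj₁ → P T.obj₃ →
    ∃ (Y : C) (_ : P Y), Nonempty (T.obj₂ ≅ Y)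

end Triangulated

end CategoryTheory

/-!
The objects admitting such a triangle form the extension product `C₀ * C₁`, which contains `C₀`
and `C₁` and is closed under isomorphisms, so it suffices to show that it is closed under
extensions. Without the octahedral axiom this is done through universal properties. Let
`X ⟶ Y ⟶ Z ⟶ X⟦1⟧` be distinguished with `X, Z ∈ C₀ * C₁`. Each decomposition triangle
`A ⟶ X ⟶ B ⟶ A⟦1⟧` makes `X ⟶ B` a reflection of `X` into `C₀^⊥` and `A ⟶ X` a coreflection
into `⊥C₁`. TR3 and a five lemma for (co)local morphisms glue these into a reflection `Y ⟶ K`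
with `K ∈ C₁` and a coreflection `M ⟶ Y` with `M ∈ C₀`. The cone `N` of `M ⟶ Y` lies in `C₀^⊥`
and `Y ⟶ N` is again a reflection into `C₀^⊥`, so `N ≅ K` and `M ⟶ Y ⟶ K` is the wanted
triangle.
-/

namespace CategoryTheory

open Category Limits Preadditive Pretriangulated

namespace ObjectProperty

section

variable {C : Type*} [Category C]

lemma isLocal.eq_zero_of_comp_eq_zero [HasZeroMorphisms C] {R : ObjectProperty C} {X Y W : C}
    {f : X ⟶ Y} (hf : R.isLocal f) (hW : R W) {g : Y ⟶ W} (h : f ≫ g = 0) : g = 0 :=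
  (hf W hW).1 (by simpa using h)

lemma isColocal.eq_zero_of_comp_eq_zero [HasZeroMorphisms C] {L : ObjectProperty C} {X Y S : C}
    {f : X ⟶ Y} (hf : L.isColocal f) (hS : L S) {g : S ⟶ X} (h : g ≫ f = 0) : g = 0 :=
  (hf S hS).1 (by simpa using h)

variable [HasShift C ℤ]

lemma isLocal_shiftFunctor_map {R : ObjectProperty C} [R.IsStableUnderShift ℤ] {X Y : C}
    {f : X ⟶ Y} (hf : R.isLocal f) (n : ℤ) : R.isLocal (f⟦n⟧') := by
  intro W hW
  let e := (shiftFunctorCompIsoId C (-n) n (by omega)).app W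
  have hα : ∀ Z : C, Function.Bijective (fun g : Z ⟶ W⟦-n⟧ ↦ g⟦n⟧' ≫ e.hom) := fun Z ↦
    e.homToEquiv.bijective.comp
      ((Functor.FullyFaithful.ofFullyFaithful (shiftFunctor C n)).map_bijective _ _)
  have hcomm : (fun g ↦ f⟦n⟧' ≫ g) ∘ (fun g : Y ⟶ W⟦-n⟧ ↦ g⟦n⟧' ≫ e.hom) =
      (fun g : X ⟶ W⟦-n⟧ ↦ g⟦n⟧' ≫ e.hom) ∘ (fun g ↦ f ≫ g) := by
    funext g
    simp
  refine (Function.Bijective.of_comp_iff _ (hα Y)).1 ?_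
  have := (hα X).comp (hf _ (R.le_shift (-n) W hW))
  rwa [← hcomm] at this

lemma isColocal_shiftFunctor_map {L : ObjectProperty C} [L.IsStableUnderShift ℤ] {X Y : C}
    {f : X ⟶ Y} (hf : L.isColocal f) (n : ℤ) : L.isColocal (f⟦n⟧') := by
  intro S hS
  let e := (shiftFunctorCompIsoId C (-n) n (by omega)).app S
  have hα : ∀ Z : C, Function.Bijective (fun g : S⟦-n⟧ ⟶ Z ↦ e.inv ≫ g⟦n⟧') := fun Z ↦
    e.homFromEquiv.bijective.comp
      ((Functor.FullyFaithful.ofFullyFaithful (shiftFunctor C n)).map_bijective _ _)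
  have hcomm : (fun g ↦ g ≫ f⟦n⟧') ∘ (fun g : S⟦-n⟧ ⟶ X ↦ e.inv ≫ g⟦n⟧') =
      (fun g : S⟦-n⟧ ⟶ Y ↦ e.inv ≫ g⟦n⟧') ∘ (fun g ↦ g ≫ f) := by
    funext g
    simp
  refine (Function.Bijective.of_comp_iff _ (hα X)).1 ?_
  have := (hα Y).comp (hf _ (L.le_shift (-n) S hS))
  rwa [← hcomm] at this

end

variable {C : Type*} [Category C] [Preadditive C] [HasZeroObject C] [HasShift C ℤ]
  [∀ n : ℤ, (shiftFunctor C n).Additive] [Pretriangulated C]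

/- `ι` and `ι'` are the first morphisms of `T.invRotate` and `T'.invRotate`; naming them avoids
terms typed by `T.invRotate.obj₂`, which is only defeq to `T.obj₁`. -/
lemma exists_invRotate_mor₁_exact_comm {T T' : Triangle C} (hT : T ∈ distTriang C)
    (hT' : T' ∈ distTriang C) (φ : T ⟶ T') :
    ∃ (ι : T.obj₃⟦(-1 : ℤ)⟧ ⟶ T.obj₁) (ι' : T'.obj₃⟦(-1 : ℤ)⟧ ⟶ T'.obj₁),
      ι ≫ T.mor₁ = 0 ∧ ι ≫ φ.hom₁ = φ.hom₃⟦(-1 : ℤ)⟧' ≫ ι' ∧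
      (∀ {W : C} (f : T'.obj₁ ⟶ W), ι' ≫ f = 0 → ∃ g, f = T'.mor₁ ≫ g) ∧
      (∀ {S : C} (f : S ⟶ T'.obj₁), f ≫ T'.mor₁ = 0 → ∃ g, f = g ≫ ι') :=
  ⟨_, _, comp_distTriang_mor_zero₁₂ _ (inv_rot_of_distTriang _ hT), ((invRotate C).map φ).comm₁,
    fun f hf ↦ Triangle.yoneda_exact₂ _ (inv_rot_of_distTriang _ hT') f hf,
    fun f hf ↦ Triangle.coyoneda_exact₂ _ (inv_rot_of_distTriang _ hT') f hf⟩

lemma isLocal_hom₂_of_distinguished {R : ObjectProperty C} [R.IsStableUnderShift ℤ]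
    {T T' : Triangle C} (hT : T ∈ distTriang C) (hT' : T' ∈ distTriang C) (φ : T ⟶ T')
    (h₁ : R.isLocal φ.hom₁) (h₃ : R.isLocal φ.hom₃) : R.isLocal φ.hom₂ := by
  intro W hW
  have hinj : ∀ g : T'.obj₂ ⟶ W, φ.hom₂ ≫ g = 0 → g = 0 := by
    intro g hg
    obtain ⟨g₁, rfl⟩ := Triangle.yoneda_exact₂ T' hT' g <| h₁.eq_zero_of_comp_eq_zero hW <| by
      rw [← reassoc_of% φ.comm₁, hg, comp_zero]
    obtain ⟨h, hh⟩ := Triangle.yoneda_exact₃ T hT (φ.hom₃ ≫ g₁) <| by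
      rw [reassoc_of% φ.comm₂, hg]
    obtain ⟨h', rfl⟩ := (isLocal_shiftFunctor_map h₁ 1 W hW).2 h
    have : g₁ = T'.mor₃ ≫ h' := by
      rw [← sub_eq_zero]
      refine h₃.eq_zero_of_comp_eq_zero hW ?_
      rw [comp_sub, hh, ← reassoc_of% φ.comm₃, sub_self]
    rw [this, comp_distTriang_mor_zero₂₃_assoc _ hT', zero_comp]
  refine ⟨fun g₁ g₂ hg ↦ sub_eq_zero.1 (hinj _ (by simp [hg])), fun f ↦ ?_⟩
  obtain ⟨ι, ι', hι, hcomm, hexact, -⟩ := exists_invRotate_mor₁_exact_comm hT hT' φ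
  obtain ⟨f₁, hf₁⟩ := (h₁ W hW).2 (T.mor₁ ≫ f)
  dsimp only at hf₁
  obtain ⟨f₂, rfl⟩ := hexact f₁ <|
    (isLocal_shiftFunctor_map h₃ (-1)).eq_zero_of_comp_eq_zero hW <| by
      rw [← reassoc_of% hcomm, hf₁, reassoc_of% hι, zero_comp]
  obtain ⟨f₃, hf₃⟩ := Triangle.yoneda_exact₂ T hT (f - φ.hom₂ ≫ f₂) <| by
    rw [comp_sub, ← hf₁, reassoc_of% φ.comm₁, sub_self]
  obtain ⟨f₄, rfl⟩ := (h₃ W hW).2 f₃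
  refine ⟨f₂ + T'.mor₂ ≫ f₄, ?_⟩
  dsimp only
  rw [comp_add, ← reassoc_of% φ.comm₂, ← hf₃, add_sub_cancel]

lemma isColocal_hom₂_of_distinguished {L : ObjectProperty C} [L.IsStableUnderShift ℤ]
    {T T' : Triangle C} (hT : T ∈ distTriang C) (hT' : T' ∈ distTriang C) (φ : T ⟶ T')
    (h₁ : L.isColocal φ.hom₁) (h₃ : L.isColocal φ.hom₃) : L.isColocal φ.hom₂ := by
  intro S hS
  have hinj : ∀ g : S ⟶ T.obj₂, g ≫ φ.hom₂ = 0 → g = 0 := by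
    intro g hg
    obtain ⟨g₁, rfl⟩ := Triangle.coyoneda_exact₂ T hT g <| h₃.eq_zero_of_comp_eq_zero hS <| by
      rw [assoc, φ.comm₂, reassoc_of% hg, zero_comp]
    obtain ⟨ι, ι', hι, hcomm, -, hexact⟩ := exists_invRotate_mor₁_exact_comm hT hT' φ
    obtain ⟨h, hh⟩ := hexact (g₁ ≫ φ.hom₁) <| by rw [assoc, ← φ.comm₁, ← assoc, hg]
    obtain ⟨h', rfl⟩ := (isColocal_shiftFunctor_map h₃ (-1) S hS).2 h
    have : g₁ = h' ≫ ι := by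
      rw [← sub_eq_zero]
      refine h₁.eq_zero_of_comp_eq_zero hS ?_
      rw [sub_comp, hh, assoc, assoc, hcomm, sub_self]
    rw [this, assoc, hι, comp_zero]
  refine ⟨fun g₁ g₂ hg ↦ sub_eq_zero.1 (hinj _ (by simp [hg])), fun f ↦ ?_⟩
  obtain ⟨f₁, hf₁⟩ := (h₃ S hS).2 (f ≫ T'.mor₂)
  dsimp only at hf₁
  obtain ⟨f₂, rfl⟩ := Triangle.coyoneda_exact₃ T hT f₁ <|
    (isColocal_shiftFunctor_map h₁ 1).eq_zero_of_comp_eq_zero hS <| by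
      rw [assoc, φ.comm₃, reassoc_of% hf₁, comp_distTriang_mor_zero₂₃ _ hT', comp_zero]
  obtain ⟨f₃, hf₃⟩ := Triangle.coyoneda_exact₂ T' hT' (f - f₂ ≫ φ.hom₂) <| by
    rw [sub_comp, ← hf₁, assoc, assoc, φ.comm₂, sub_self]
  obtain ⟨f₄, rfl⟩ := (h₁ S hS).2 f₃
  refine ⟨f₂ + f₄ ≫ T.mor₁, ?_⟩
  dsimp only at hf₃ ⊢
  rw [add_comp, assoc, φ.comm₁, ← assoc, ← hf₃, add_sub_cancel]

lemma isLocal_mor₂_of_distinguished (P : ObjectProperty C) [P.IsTriangulated] {T : Triangle C}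
    (hT : T ∈ distTriang C) (h₁ : P T.obj₁) : P.rightOrthogonal.isLocal T.mor₂ :=
  (le_isLocal_iff _ _).2 (isLocal_trW P).ge _ (trW.mk' P hT h₁)

lemma isColocal_mor₁_of_distinguished (Q : ObjectProperty C) [Q.IsTriangulated] {T : Triangle C}
    (hT : T ∈ distTriang C) (h₃ : Q T.obj₃) : Q.leftOrthogonal.isColocal T.mor₁ :=
  (le_isColocal_iff _ _).2 (isColocal_trW Q).ge _ (trW.mk Q hT h₃)

lemma rightOrthogonal_obj₃_of_isColocal_mor₁ {L : ObjectProperty C} [L.IsStableUnderShift ℤ]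
    {T : Triangle C} (hT : T ∈ distTriang C) (h : L.isColocal T.mor₁) :
    L.rightOrthogonal T.obj₃ := by
  intro S f hS
  obtain ⟨g, rfl⟩ := Triangle.coyoneda_exact₃ T hT f <|
    (isColocal_shiftFunctor_map h 1).eq_zero_of_comp_eq_zero hS <| by
      rw [assoc, comp_distTriang_mor_zero₃₁ T hT, comp_zero]
  obtain ⟨g', rfl⟩ := (h S hS).2 g
  simp [comp_distTriang_mor_zero₁₂ T hT]

lemma exists_isLocal_from_obj₂ {R Q : ObjectProperty C} [R.IsStableUnderShift ℤ]
    [Q.IsStableUnderShift ℤ] [Q.IsTriangulatedClosed₂] (hQR : Q ≤ R) {T : Triangle C}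
    (hT : T ∈ distTriang C) {B₁ B₃ : C} (hB₁ : Q B₁) (hB₃ : Q B₃) {b₁ : T.obj₁ ⟶ B₁}
    {b₃ : T.obj₃ ⟶ B₃} (hb₁ : R.isLocal b₁) (hb₃ : R.isLocal b₃) :
    ∃ (K : C) (k : T.obj₂ ⟶ K), Q K ∧ R.isLocal k := by
  obtain ⟨ε, hε⟩ := (hb₃ _ (hQR _ (Q.le_shift 1 _ hB₁))).2 (T.mor₃ ≫ b₁⟦1⟧')
  obtain ⟨K, hK, β, γ, hK'⟩ := Q.distinguished_cocone_triangle₂ ε hB₁ hB₃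
  obtain ⟨k, hk₁, hk₂⟩ := complete_distinguished_triangle_morphism₂ _ _ hT hK' b₁ b₃ hε.symm
  exact ⟨K, k, hK, isLocal_hom₂_of_distinguished hT hK' (Triangle.homMk _ _ b₁ k b₃ hk₁ hk₂ hε.symm)
    hb₁ hb₃⟩

lemma exists_isColocal_to_obj₂ {L P : ObjectProperty C} [L.IsStableUnderShift ℤ]
    [P.IsStableUnderShift ℤ] [P.IsTriangulatedClosed₂] (hPL : P ≤ L) {T : Triangle C}
    (hT : T ∈ distTriang C) {A₁ A₃ : C} (hA₁ : P A₁) (hA₃ : P A₃) {a₁ : A₁ ⟶ T.obj₁}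
    {a₃ : A₃ ⟶ T.obj₃} (ha₁ : L.isColocal a₁) (ha₃ : L.isColocal a₃) :
    ∃ (M : C) (m : M ⟶ T.obj₂), P M ∧ L.isColocal m := by
  obtain ⟨ψ, hψ⟩ := (isColocal_shiftFunctor_map ha₁ 1 _ (hPL _ hA₃)).2 (a₃ ≫ T.mor₃)
  obtain ⟨M, hM, α, β, hM'⟩ := P.distinguished_cocone_triangle₂ ψ hA₁ hA₃
  obtain ⟨m, hm₁, hm₂⟩ := complete_distinguished_triangle_morphism₂ _ _ hM' hT a₁ a₃ hψ
  exact ⟨M, m, hM, isColocal_hom₂_of_distinguished hM' hT (Triangle.homMk _ _ a₁ m a₃ hm₁ hm₂ hψ)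
    ha₁ ha₃⟩

lemma isTriangulated_extensionProduct {P Q : ObjectProperty C} [P.IsTriangulated]
    [Q.IsTriangulated] (hPQ : Q ≤ P.rightOrthogonal) : (extensionProduct P Q).IsTriangulated where
  exists_zero :=
    let ⟨Z, hZ, hPZ⟩ := P.exists_prop_of_containsZero
    ⟨Z, hZ, le_extensionProduct_left Q _ hPZ⟩
  toIsTriangulatedClosed₂ := .mk' fun T hT ⟨A₁, B₁, a₁, b₁, c₁, hT₁, hA₁, hB₁⟩
      ⟨A₃, B₃, a₃, b₃, c₃, hT₃, hA₃, hB₃⟩ ↦ by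
    have hPL : P ≤ Q.leftOrthogonal := fun X hX Y f hY ↦ hPQ Y hY f hX
    obtain ⟨K, k, hK, hk⟩ := exists_isLocal_from_obj₂ hPQ hT hB₁ hB₃
      (isLocal_mor₂_of_distinguished P hT₁ hA₁) (isLocal_mor₂_of_distinguished P hT₃ hA₃)
    obtain ⟨M, m, hM, hm⟩ := exists_isColocal_to_obj₂ hPL hT hA₁ hA₃
      (isColocal_mor₁_of_distinguished Q hT₁ hB₁) (isColocal_mor₁_of_distinguished Q hT₃ hB₃)
    obtain ⟨N, n, o, hN⟩ := distinguished_cocone_triangle m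
    have hNR : P.rightOrthogonal N := fun S f hS ↦
      rightOrthogonal_obj₃_of_isColocal_mor₁ hN hm f (hPL _ hS)
    have hn : P.rightOrthogonal.isLocal n := isLocal_mor₂_of_distinguished P hN hM
    -- `k` and `n` are both `P.rightOrthogonal`-reflections of `T.obj₂`, so `K ≅ N`.
    obtain ⟨ψ, hψ⟩ := (hk N hNR).2 n
    have : IsIso ψ := (isLocal_iff_isIso _ ψ (hPQ _ hK) hNR).1
      (P.rightOrthogonal.isLocal.of_precomp k ψ hk (by simpa [hψ] using hn))
    rw [← extensionProduct_isoClosure_right]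
    exact ⟨M, N, m, n, o, hN, hM, K, hK, ⟨(asIso ψ).symm⟩⟩

end ObjectProperty

end CategoryTheory

namespace CategoryTheory.Triangulated.Subcategory

variable {C : Type*} [Category C] [Preadditive C] [HasZeroObject C] [HasShift C ℤ]
  [∀ n : ℤ, (shiftFunctor C n).Additive] [Pretriangulated C]

instance (S : Subcategory C) : ObjectProperty.IsTriangulated S.P where
  exists_zero := let ⟨Z, hZ, h⟩ := S.zero'; ⟨Z, hZ, h⟩
  isStableUnderShiftBy n := ⟨fun X hX ↦ S.shift X n hX⟩
  ext₂' := S.ext₂'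

def ofIsTriangulated (P : ObjectProperty C) [P.IsTriangulated] : Subcategory C where
  P := P
  zero' := let ⟨Z, hZ, h⟩ := P.exists_prop_of_containsZero; ⟨Z, hZ, h⟩
  shift X n hX := P.le_shift n X hX
  ext₂' := P.ext_of_isTriangulatedClosed₂'

end CategoryTheory.Triangulated.Subcategory

/-- Given a semi-orthogonal decomposition `(C₀, C₁)` of a triangulated category `C`
(i.e. `Hom(x, y⟦k⟧) = 0` for `x ∈ C₀`, `y ∈ C₁`, and the smallest strictly full triangulated
subcategory containing both is `C` itself), every object `x` fits in a distinguished triangle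
`x₀ ⟶ x ⟶ x₁ ⟶ x₀⟦1⟧` with `x₀ ∈ C₀` and `x₁ ∈ C₁`. -/
theorem sod_decomposition_triangle {C : Type*} [Category C] [Preadditive C] [HasZeroObject C]
    [HasShift C ℤ] [∀ n : ℤ, (shiftFunctor C n).Additive] [Pretriangulated C]
    (C₀ C₁ : Triangulated.Subcategory C)
    (horth : ∀ (x y : C) (k : ℤ), C₀.P x → C₁.P y → ∀ f : x ⟶ y⟦k⟧, f = 0)
    (hgen : ∀ S : Triangulated.Subcategory C, ClosedUnderIsomorphisms S.P →
      (∀ x, C₀.P x → S.P x) → (∀ x, C₁.P x → S.P x) → ∀ x, S.P x)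
    (x : C) :
    ∃ (x₀ x₁ : C) (f : x₀ ⟶ x) (g : x ⟶ x₁) (h : x₁ ⟶ x₀⟦(1 : ℤ)⟧),
      C₀.P x₀ ∧ C₁.P x₁ ∧ Triangle.mk f g h ∈ distTriang C := by
  have hPQ : C₁.P ≤ ObjectProperty.rightOrthogonal C₀.P := fun y hy x f hx ↦ by
    simpa using horth x y 0 hx hy (f ≫ (shiftFunctorZero C ℤ).inv.app y)
  have := ObjectProperty.isTriangulated_extensionProduct hPQ
  obtain ⟨x₀, x₁, f, g, h, hT, h₀, h₁⟩ :=
    hgen (.ofIsTriangulated (.extensionProduct C₀.P C₁.P))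
      ⟨(ObjectProperty.extensionProduct C₀.P C₁.P).prop_of_iso⟩
      (fun _ hy ↦ ObjectProperty.le_extensionProduct_left _ _ hy)
      (fun _ hy ↦ ObjectProperty.le_extensionProduct_right _ _ hy) x
  exact ⟨x₀, x₁, f, g, h, h₀, h₁, hT⟩
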